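/- arXiv:2511.12358 — 2 statements merged into one kernel-verified Lean document; each statement's English description precedes it below -/
import Mathlib

section
/- Let u be an aperiodic sequence over a finite alphabet. Then for every n ∈ ℕ there exist a word f of length n and two distinct letters a, b such that both af and bf occur infinitely many times in u (in particular, f is a left special factor of u). -/
/-! If no word of length `n` has two distinct left extensions occurring infinitely often, then
deleting the first letter is injective on the set `S (n + 1)` of words of length `n + 1` occurring
infinitely often, so `#S (n + 1) ≤ #S n`. Deleting the last letter maps `S (n + 1)` onto `S n`,
hence bijectively: every word of `S n` has a unique right extension in `S (n + 1)`. As eventually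
every factor of `u` lies in `S (n + 1)`, from some point on each letter of `u` is a fixed function
of the `n` letters before it, and pigeonholing on windows of length `n + 1` makes `u` eventually
periodic. -/

namespace ReflPaper

variable {A : Type*}

/-- The factor of `u` of length `n` at position `i`: `u(i) u(i+1) ⋯ u(i+n-1)`. -/
def factorAt (u : ℕ → A) (n i : ℕ) : List A :=
  (List.range n).map (fun k => u (i + k))

/-- The word `w` occurs in the sequence `u` at position `i`. -/
def OccursAt (u : ℕ → A) (w : List A) (i : ℕ) : Prop :=
  w = factorAt u w.length i

/-- The language of `u`: the set of all factors of `u`. -/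
def Lang (u : ℕ → A) : Set (List A) := {w | ∃ i, OccursAt u w i}

/-- The set of factors of `u` of length `n`. -/
def LangN (u : ℕ → A) (n : ℕ) : Set (List A) := {w | w.length = n ∧ w ∈ Lang u}

/-- The word `w` occurs infinitely many times in `u`. -/
def OccursInf (u : ℕ → A) (w : List A) : Prop := {i | OccursAt u w i}.Infinite

/-- `u` is eventually periodic. -/
def EventuallyPeriodic (u : ℕ → A) : Prop :=
  ∃ N p : ℕ, 1 ≤ p ∧ ∀ i, N ≤ i → u (i + p) = u i

/-- Two words are reflectively equivalent if one equals the other or its reversal. -/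
def ReflEquiv (w v : List A) : Prop := w = v ∨ w = v.reverse

/-- Reflective equivalence as a setoid on words. -/
def reflSetoid (A : Type*) : Setoid (List A) where
  r := ReflEquiv
  iseqv := by
    constructor
    · intro w; exact Or.inl rfl
    · intro w v h
      rcases h with h | h
      · exact Or.inl h.symm
      · subst h; simp [ReflEquiv]
    · intro w v x h1 h2
      rcases h1 with h1 | h1 <;> rcases h2 with h2 | h2 <;> subst h1 <;>
        simp [ReflEquiv, h2]

/-- The number of reflective-equivalence classes of words in a set `S`. -/
noncomputable def nClasses (S : Set (List A)) : ℕ :=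
  Set.ncard (Quotient.mk (reflSetoid A) '' S)

/-- The reflection complexity `r_u(n)`. -/
noncomputable def reflComplexity (u : ℕ → A) (n : ℕ) : ℕ := nClasses (LangN u n)

/-- The factor complexity `C_u(n) = #L_n(u)`. -/
noncomputable def factorComplexity (u : ℕ → A) (n : ℕ) : ℕ := (LangN u n).ncard

/-- The palindromic complexity `P_u(n)`. -/
noncomputable def palComplexity (u : ℕ → A) (n : ℕ) : ℕ :=
  Set.ncard {w ∈ LangN u n | w.reverse = w}

/-- Both-sided extensions of `w` in the language of `u`. -/
def Bext (u : ℕ → A) (w : List A) : Set (List A) :=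
  {x ∈ Lang u | ∃ a b : A, x = a :: (w ++ [b])}

/-- Right extensions of `w` in the language of `u`. -/
def Rext (u : ℕ → A) (w : List A) : Set (List A) :=
  {x ∈ Lang u | ∃ a : A, x = w ++ [a]}

/-- `T(w)`: the number of reflective-equivalence classes of `Bext(w) ∪ Bext(w̄)`. -/
noncomputable def TT (u : ℕ → A) (w : List A) : ℕ :=
  nClasses (Bext u w ∪ Bext u w.reverse)

/-- `w` is a right special factor of `u`. -/
def RightSpecial (u : ℕ → A) (w : List A) : Prop :=
  ∃ a b : A, a ≠ b ∧ w ++ [a] ∈ Lang u ∧ w ++ [b] ∈ Lang u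

/-- `w` is a left special factor of `u`. -/
def LeftSpecial (u : ℕ → A) (w : List A) : Prop :=
  ∃ a b : A, a ≠ b ∧ a :: w ∈ Lang u ∧ b :: w ∈ Lang u

/-- `u` is Sturmian: `C_u(n) = n + 1` for all `n`. -/
def Sturmian (u : ℕ → A) : Prop := ∀ n, factorComplexity u n = n + 1

/-- `u` is quasi-Sturmian: `C_u(n) = n + c` eventually. -/
def QuasiSturmian (u : ℕ → A) : Prop :=
  ∃ n₀ c : ℕ, ∀ n, n₀ ≤ n → factorComplexity u n = n + c

open Filter

lemma factorAt_length (u : ℕ → A) (n i : ℕ) : (factorAt u n i).length = n := by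
  simp [factorAt]

lemma factorAt_succ_right (u : ℕ → A) (n i : ℕ) :
    factorAt u (n + 1) i = factorAt u n i ++ [u (i + n)] := by
  simp [factorAt, List.range_succ]

lemma factorAt_succ_left (u : ℕ → A) (n i : ℕ) :
    factorAt u (n + 1) i = u i :: factorAt u n (i + 1) := by
  simp only [factorAt, List.range_succ_eq_map, List.map_cons, List.map_map, add_zero,
    Function.comp_def, add_assoc, add_comm 1]

lemma factorAt_eq_iff {u : ℕ → A} {n i j : ℕ} :
    factorAt u n i = factorAt u n j ↔ ∀ k < n, u (i + k) = u (j + k) := by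
  simp [factorAt, List.map_inj_left]

lemma occursAt_factorAt (u : ℕ → A) (n i : ℕ) : OccursAt u (factorAt u n i) i := by
  simp [OccursAt, factorAt_length]

lemma occursAt_append_singleton {u : ℕ → A} {f : List A} {b : A} {i : ℕ} :
    OccursAt u (f ++ [b]) i ↔ OccursAt u f i ∧ b = u (i + f.length) := by
  simp only [OccursAt, List.length_append, List.length_singleton, factorAt_succ_right,
    List.append_singleton_inj]

lemma occursAt_cons {u : ℕ → A} {f : List A} {a : A} {i : ℕ} :
    OccursAt u (a :: f) i ↔ a = u i ∧ OccursAt u f (i + 1) := by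
  simp only [OccursAt, List.length_cons, factorAt_succ_left, List.cons.injEq]

lemma occursInf_iff_frequently {u : ℕ → A} {w : List A} :
    OccursInf u w ↔ ∃ᶠ i in atTop, OccursAt u w i :=
  Nat.frequently_atTop_iff_infinite.symm

lemma OccursInf.of_append_singleton {u : ℕ → A} {f : List A} {b : A}
    (h : OccursInf u (f ++ [b])) : OccursInf u f :=
  h.mono fun _ hi => (occursAt_append_singleton.1 hi).1

lemma OccursInf.of_cons {u : ℕ → A} {f : List A} {a : A}
    (h : OccursInf u (a :: f)) : OccursInf u f := by
  rw [occursInf_iff_frequently] at h ⊢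
  exact (tendsto_add_atTop_nat 1).frequently (h.mono fun _ hi => (occursAt_cons.1 hi).2)

lemma OccursInf.exists_append_singleton [Finite A] {u : ℕ → A} {f : List A}
    (h : OccursInf u f) : ∃ b, OccursInf u (f ++ [b]) := by
  simp only [occursInf_iff_frequently, ← frequently_exists] at h ⊢
  exact h.mono fun i hi => ⟨_, occursAt_append_singleton.2 ⟨hi, rfl⟩⟩

lemma eventually_occursInf_factorAt [Finite A] (u : ℕ → A) (m : ℕ) :
    ∀ᶠ i in atTop, OccursInf u (factorAt u m i) := by
  have hrare : ∀ᶠ i in atTop, ∀ w ∈ {w : List A | w.length = m ∧ ¬ OccursInf u w},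
      ¬ OccursAt u w i :=
    ((List.finite_length_eq A m).subset fun _ hw => hw.1).eventually_all.2
      fun _ hw => by simpa [occursInf_iff_frequently] using hw.2
  filter_upwards [hrare] with i hi
  by_contra h
  exact hi _ ⟨factorAt_length u m i, h⟩ (occursAt_factorAt u m i)

lemma _root_.Set.injOn_of_image_eq_of_ncard_le {α β : Type*} {s : Set α} {t : Set β}
    {g : α → β} (hs : s.Finite) (himage : g '' s = t) (hcard : s.ncard ≤ t.ncard) :
    Set.InjOn g s :=
  Set.injOn_of_ncard_image_eq (le_antisymm (Set.ncard_image_le hs) (himage ▸ hcard)) hs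

def factorsOccurringInf (u : ℕ → A) (m : ℕ) : Set (List A) :=
  {w | w.length = m ∧ OccursInf u w}

def UniqueInfLeftExt (u : ℕ → A) (n : ℕ) : Prop :=
  ∀ f : List A, f.length = n → ∀ a b : A,
    OccursInf u (a :: f) → OccursInf u (b :: f) → a = b

lemma factorsOccurringInf_finite [Finite A] (u : ℕ → A) (m : ℕ) :
    (factorsOccurringInf u m).Finite :=
  (List.finite_length_eq A m).subset fun _ hw => hw.1

lemma image_dropLast_factorsOccurringInf_succ [Finite A] (u : ℕ → A) (m : ℕ) :
    List.dropLast '' factorsOccurringInf u (m + 1) = factorsOccurringInf u m := by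
  ext f
  constructor
  · rintro ⟨w, ⟨hlen, hw⟩, rfl⟩
    have hne : w ≠ [] := List.ne_nil_of_length_eq_add_one hlen
    rw [← List.dropLast_append_getLast hne] at hw
    exact ⟨by simp [hlen], hw.of_append_singleton⟩
  · rintro ⟨hlen, hf⟩
    obtain ⟨b, hb⟩ := hf.exists_append_singleton
    exact ⟨f ++ [b], ⟨by simp [hlen], hb⟩, List.dropLast_concat⟩

lemma injOn_tail_factorsOccurringInf_succ {u : ℕ → A} {n : ℕ} (hleft : UniqueInfLeftExt u n) :
    Set.InjOn List.tail (factorsOccurringInf u (n + 1)) := by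
  rintro w ⟨hw, ha⟩ w' ⟨hw', hb⟩ htail
  obtain ⟨a, f, rfl⟩ := List.exists_of_length_succ w hw
  obtain ⟨b, g, rfl⟩ := List.exists_of_length_succ w' hw'
  obtain rfl : f = g := htail
  rw [hleft f (by simpa using hw) a b ha hb]

lemma mapsTo_tail_factorsOccurringInf_succ (u : ℕ → A) (m : ℕ) :
    Set.MapsTo List.tail (factorsOccurringInf u (m + 1)) (factorsOccurringInf u m) := by
  rintro (_ | ⟨a, f⟩) ⟨hlen, hw⟩
  · simp at hlen
  · exact ⟨by simpa using hlen, hw.of_cons⟩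

lemma eq_of_occursInf_append_singleton [Finite A] {u : ℕ → A} {n : ℕ}
    (hleft : UniqueInfLeftExt u n) {f : List A} (hf : f.length = n) {b c : A}
    (hb : OccursInf u (f ++ [b])) (hc : OccursInf u (f ++ [c])) : b = c := by
  have hcard : (factorsOccurringInf u (n + 1)).ncard ≤ (factorsOccurringInf u n).ncard :=
    Set.ncard_le_ncard_of_injOn _ (mapsTo_tail_factorsOccurringInf_succ u n)
      (injOn_tail_factorsOccurringInf_succ hleft) (factorsOccurringInf_finite u n)
  have hinj : Set.InjOn List.dropLast (factorsOccurringInf u (n + 1)) :=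
    Set.injOn_of_image_eq_of_ncard_le (factorsOccurringInf_finite u _)
      (image_dropLast_factorsOccurringInf_succ u n) hcard
  simpa using hinj ⟨by simp [hf], hb⟩ ⟨by simp [hf], hc⟩ (by simp)

lemma eventuallyPeriodic_of_eventually_eq_factorAt [Finite A] {u : ℕ → A} {n : ℕ}
    (g : List A → A) (hg : ∀ᶠ i in atTop, u (i + n) = g (factorAt u n i)) :
    EventuallyPeriodic u := by
  obtain ⟨N, hN⟩ := eventually_atTop.1 hg
  have hnext : ∀ m, N ≤ m → factorAt u (n + 1) (m + 1) =
      (factorAt u (n + 1) m).tail ++ [g (factorAt u (n + 1) m).tail] := by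
    intro m hm
    rw [factorAt_succ_left u n m, List.tail_cons, factorAt_succ_right, hN (m + 1) (by omega)]
  obtain ⟨i, hi, j, hj, hij, hwin⟩ := (Set.Ici_infinite N).exists_ne_map_eq_of_mapsTo
    (fun m _ => factorAt_length u (n + 1) m) (List.finite_length_eq A (n + 1))
  wlog hlt : i < j generalizing i j
  · exact this j hj i hi hij.symm hwin.symm (by omega)
  have hshift : ∀ k, factorAt u (n + 1) (i + k) = factorAt u (n + 1) (j + k) := by
    intro k
    induction k with
    | zero => exact hwin
    | succ k ih =>
      rw [← add_assoc, ← add_assoc, hnext _ (by simp at hi; omega),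
        hnext _ (by simp at hj; omega), ih]
  refine ⟨i, j - i, by omega, fun m hm => ?_⟩
  have := factorAt_eq_iff.1 (hshift (m - i)) 0 n.succ_pos
  convert this.symm using 2 <;> omega

theorem eventuallyPeriodic_of_uniqueInfLeftExt [Finite A] (u : ℕ → A) (n : ℕ)
    (hleft : UniqueInfLeftExt u n) : EventuallyPeriodic u := by
  have : Nonempty A := ⟨u 0⟩
  refine eventuallyPeriodic_of_eventually_eq_factorAt (n := n)
    (fun f => Classical.epsilon fun b => OccursInf u (f ++ [b])) ?_
  filter_upwards [eventually_occursInf_factorAt u (n + 1)] with i hi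
  rw [factorAt_succ_right] at hi
  exact eq_of_occursInf_append_singleton hleft (factorAt_length u n i) hi
    (Classical.epsilon_spec (p := fun b => OccursInf u (_ ++ [b])) ⟨_, hi⟩)

/-- for aperiodic `u` and every `n`, there are a word `f` of length `n`
and distinct letters `a, b` such that `af` and `bf` occur infinitely many times in `u`. -/
theorem stmt16 {A : Type*} [Fintype A] (u : ℕ → A) (hu : ¬ EventuallyPeriodic u) :
    ∀ n : ℕ, ∃ (f : List A) (a b : A), f.length = n ∧ a ≠ b ∧
      OccursInf u (a :: f) ∧ OccursInf u (b :: f) := by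
  intro n
  by_contra! h
  exact hu (eventuallyPeriodic_of_uniqueInfLeftExt u n
    fun f hf a b ha hb => by_contra fun hab => h f a b hf hab ha hb)

end ReflPaper
end

section
/- Let u be an aperiodic sequence over a finite alphabet with r_u(2) = 2. Then either there exist two distinct letters a, b such that the set of factors of u of length 2 is exactly {aa, ab, ba}, or there exist pairwise distinct letters a, b, c such that the set of factors of u of length 2 is exactly {ac, bc, ca, cb}. -/
/-!
Call two consecutive length-2 factors `u(i)u(i+1)` and `u(i+1)u(i+2)` a change if they are not
reflectively equivalent. Without any change every length-2 factor is equivalent to the first one,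
so `u` alternates between two letters and is periodic. A change at position `i` produces two
inequivalent factors `xm` and `my` sharing the letter `m = u(i+1)`; as `r_u(2) = 2`, every
length-2 factor is `xm`, `mx`, `ym` or `my`. Each of these words really occurs: if `xm` (or `mx`)
were missing for a letter `x ∉ {m, y}`, then `x` could occur at most at position `0`, and from
position `1` on `u` would alternate between `m` and `y`. If `x = m` the set is `{mm, my, ym}`,
otherwise it is `{xm, ym, mx, my}`.
-/

namespace ReflPaper

variable {A : Type*}

@[simp]
lemma reflEquiv_pair_iff {a b x y : A} :
    ReflEquiv [a, b] [x, y] ↔ (a = x ∧ b = y) ∨ (a = y ∧ b = x) := by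
  simp [ReflEquiv]

lemma mem_langN_two_iff {u : ℕ → A} {w : List A} :
    w ∈ LangN u 2 ↔ ∃ i, w = [u i, u (i + 1)] := by
  constructor
  · rintro ⟨hlen, i, hi⟩
    rw [OccursAt, hlen] at hi
    exact ⟨i, by simpa [factorAt, List.range_succ] using hi⟩
  · rintro ⟨i, rfl⟩
    exact ⟨rfl, i, by simp [OccursAt, factorAt, List.range_succ]⟩

lemma eventuallyPeriodic_of_reflEquiv_pair (u : ℕ → A) (N : ℕ) (x y : A)
    (h : ∀ i, N ≤ i → ReflEquiv [u i, u (i + 1)] [x, y]) : EventuallyPeriodic u := by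
  refine ⟨N, 2, by norm_num, fun i hi => ?_⟩
  have h₀ := reflEquiv_pair_iff.mp (h i hi)
  have h₁ := reflEquiv_pair_iff.mp (h (i + 1) (by omega))
  grind

lemma exists_not_reflEquiv_succ {u : ℕ → A} (hu : ¬ EventuallyPeriodic u) :
    ∃ i, ¬ ReflEquiv [u i, u (i + 1)] [u (i + 1), u (i + 2)] := by
  by_contra! hchange
  have hfirst : ∀ i, ReflEquiv [u i, u (i + 1)] [u 0, u 1] := by
    intro i
    induction i with
    | zero => exact Or.inl rfl
    | succ i ih => exact (reflSetoid A).iseqv.trans ((reflSetoid A).iseqv.symm (hchange i)) ih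
  exact hu (eventuallyPeriodic_of_reflEquiv_pair u 0 (u 0) (u 1) fun i _ => hfirst i)

lemma reflEquiv_or_reflEquiv_of_nClasses_eq_two {S : Set (List A)} (hS : nClasses S = 2)
    {v w z : List A} (hv : v ∈ S) (hw : w ∈ S) (hvw : ¬ ReflEquiv v w) (hz : z ∈ S) :
    ReflEquiv z v ∨ ReflEquiv z w := by
  set q : List A → Quotient (reflSetoid A) := Quotient.mk _
  obtain ⟨q₁, q₂, -, hq⟩ := Set.ncard_eq_two.mp hS
  have hmem : ∀ t ∈ S, q t = q₁ ∨ q t = q₂ := fun t ht => by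
    have : q t ∈ q '' S := Set.mem_image_of_mem q ht
    rwa [hq] at this
  have hne : q v ≠ q w := fun h => hvw (Quotient.eq.mp h)
  have hzvw : q z = q v ∨ q z = q w := by grind [hmem v hv, hmem w hw, hmem z hz]
  exact hzvw.imp Quotient.eq.mp Quotient.eq.mp

section Star

variable {u : ℕ → A} {m x y : A}

lemma pair_mem_langN_two_of_star (hu : ¬ EventuallyPeriodic u) (hxm : x ≠ m) (hxy : x ≠ y)
    (hL : ∀ i, ReflEquiv [u i, u (i + 1)] [x, m] ∨ ReflEquiv [u i, u (i + 1)] [m, y]) :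
    [x, m] ∈ LangN u 2 ∧ [m, x] ∈ LangN u 2 := by
  by_contra hmissing
  -- `x` occurs only inside `xm` or `mx`, so losing one of them confines `x` to position `0`.
  have hx : ∀ i, 0 < i → u i ≠ x := by
    intro i hi hux
    obtain ⟨j, rfl⟩ : ∃ j, i = j + 1 := ⟨i - 1, by omega⟩
    have hprev := hL j
    have hnext := hL (j + 1)
    simp only [reflEquiv_pair_iff] at hprev hnext
    refine hmissing ⟨mem_langN_two_iff.mpr ⟨j + 1, ?_⟩, mem_langN_two_iff.mpr ⟨j, ?_⟩⟩ <;> grind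
  refine hu (eventuallyPeriodic_of_reflEquiv_pair u 1 m y fun i hi => ?_)
  have hi' := hL i
  simp only [reflEquiv_pair_iff] at hi' ⊢
  have := hx i hi
  have := hx (i + 1) (by omega)
  grind

lemma langN_two_subset_of_star
    (hL : ∀ i, ReflEquiv [u i, u (i + 1)] [x, m] ∨ ReflEquiv [u i, u (i + 1)] [m, y]) :
    LangN u 2 ⊆ {[x, m], [m, x], [y, m], [m, y]} := by
  intro w hw
  obtain ⟨i, rfl⟩ := mem_langN_two_iff.mp hw
  have := hL i
  simp only [reflEquiv_pair_iff] at this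
  simp only [Set.mem_insert_iff, Set.mem_singleton_iff, List.cons.injEq, and_true]
  tauto

lemma langN_two_eq_of_star (hu : ¬ EventuallyPeriodic u) (hxy : x ≠ y) (hym : y ≠ m)
    (hL : ∀ i, ReflEquiv [u i, u (i + 1)] [x, m] ∨ ReflEquiv [u i, u (i + 1)] [m, y]) :
    (∃ a b : A, a ≠ b ∧ LangN u 2 = {[a, a], [a, b], [b, a]}) ∨
    (∃ a b c : A, a ≠ b ∧ c ≠ a ∧ c ≠ b ∧
      LangN u 2 = {[a, c], [b, c], [c, a], [c, b]}) := by
  have hL' : ∀ i, ReflEquiv [u i, u (i + 1)] [y, m] ∨ ReflEquiv [u i, u (i + 1)] [m, x] := by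
    intro i; have := hL i; simp only [reflEquiv_pair_iff] at this ⊢; tauto
  obtain ⟨hym₁, hym₂⟩ := pair_mem_langN_two_of_star hu hym hxy.symm hL'
  have hsub := langN_two_subset_of_star hL
  by_cases hxm : x = m
  · subst hxm
    have hxx : [x, x] ∈ LangN u 2 := by
      by_contra hmissing
      refine hu (eventuallyPeriodic_of_reflEquiv_pair u 0 x y fun i _ => ?_)
      refine (hL i).resolve_left fun h => hmissing (mem_langN_two_iff.mpr ⟨i, ?_⟩)
      simp only [reflEquiv_pair_iff, or_self] at h
      rw [h.1, h.2]
    refine Or.inl ⟨x, y, hxy, hsub.antisymm ?_ |>.trans ?_⟩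
    · simp only [Set.insert_subset_iff, Set.singleton_subset_iff]
      exact ⟨hxx, hxx, hym₁, hym₂⟩
    · ext w
      simp only [Set.mem_insert_iff, Set.mem_singleton_iff]
      tauto
  · obtain ⟨hxm₁, hxm₂⟩ := pair_mem_langN_two_of_star hu hxm hxy hL
    refine Or.inr ⟨x, y, m, hxy, Ne.symm hxm, Ne.symm hym, hsub.antisymm ?_ |>.trans ?_⟩
    · simp only [Set.insert_subset_iff, Set.singleton_subset_iff]
      exact ⟨hxm₁, hxm₂, hym₁, hym₂⟩
    · ext w
      simp only [Set.mem_insert_iff, Set.mem_singleton_iff]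
      tauto

end Star

theorem stmt19_general {A : Type*} (u : ℕ → A) (hu : ¬ EventuallyPeriodic u)
    (hr : reflComplexity u 2 = 2) :
    (∃ a b : A, a ≠ b ∧ LangN u 2 = {[a, a], [a, b], [b, a]}) ∨
    (∃ a b c : A, a ≠ b ∧ c ≠ a ∧ c ≠ b ∧
      LangN u 2 = {[a, c], [b, c], [c, a], [c, b]}) := by
  obtain ⟨i, hchange⟩ := exists_not_reflEquiv_succ hu
  have hL : ∀ j, ReflEquiv [u j, u (j + 1)] [u i, u (i + 1)] ∨
      ReflEquiv [u j, u (j + 1)] [u (i + 1), u (i + 2)] := fun j =>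
    reflEquiv_or_reflEquiv_of_nClasses_eq_two hr (mem_langN_two_iff.mpr ⟨i, rfl⟩)
      (mem_langN_two_iff.mpr ⟨i + 1, rfl⟩) hchange (mem_langN_two_iff.mpr ⟨j, rfl⟩)
  have hxy : u i ≠ u (i + 2) := fun h => hchange (by simp [h])
  by_cases hym : u (i + 2) = u (i + 1)
  · refine langN_two_eq_of_star hu hxy.symm (hym ▸ hxy) fun j => ?_
    have := hL j
    simp only [reflEquiv_pair_iff] at this ⊢
    tauto
  · exact langN_two_eq_of_star hu hxy hym hL

/-- an aperiodic `u` with `r_u(2) = 2` has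
`L_2(u) = {aa, ab, ba}` for distinct `a, b`, or `L_2(u) = {ac, bc, ca, cb}`
for pairwise distinct `a, b, c`. -/
theorem stmt19 {A : Type*} [Fintype A] (u : ℕ → A) (hu : ¬ EventuallyPeriodic u)
    (hr : reflComplexity u 2 = 2) :
    (∃ a b : A, a ≠ b ∧ LangN u 2 = {[a, a], [a, b], [b, a]}) ∨
    (∃ a b c : A, a ≠ b ∧ c ≠ a ∧ c ≠ b ∧
      LangN u 2 = {[a, c], [b, c], [c, a], [c, b]}) :=
  stmt19_general u hu hr

end ReflPaper
end
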